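/- For each m ≥ 1 the formulas A_m = χ_m ∧ EX AG ¬p (with χ₀ = ∀□p, χ_{k+1} = p ∧ EX(¬p ∧ EX χ_k)) are pairwise jointly unsatisfiable on the models of the family {M_k}: no state of any M_k satisfies both A_m and A_{m'} for m ≠ m'. -/

import Mathlib

/-- CTL formulas: variables, falsehood, implication, AX, ∀U, ∃U. -/
inductive CTL : Type where
  | var : ℕ → CTL
  | bot : CTL
  | imp : CTL → CTL → CTL
  | ax : CTL → CTL
  | au : CTL → CTL → CTL
  | eu : CTL → CTL → CTL

namespace CTL
def neg (φ : CTL) : CTL := imp φ bot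
def top : CTL := imp bot bot
def conj (φ ψ : CTL) : CTL := neg (imp φ (neg ψ))
def iffc (φ ψ : CTL) : CTL := conj (imp φ ψ) (imp ψ φ)
def ex (φ : CTL) : CTL := neg (ax (neg φ))
def ef (φ : CTL) : CTL := eu top φ
def ag (φ : CTL) : CTL := neg (ef (neg φ))
end CTL

/-- Serial Kripke models. -/
structure Kripke (S : Type) where
  rel : S → S → Prop
  serial : ∀ s, ∃ t, rel s t
  val : ℕ → S → Prop

def isPath {S : Type} (M : Kripke S) (π : ℕ → S) : Prop :=
  ∀ i, M.rel (π i) (π (i + 1))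

/-- CTL satisfaction over serial Kripke models. -/
def sat {S : Type} (M : Kripke S) : CTL → S → Prop
  | .var n, s => M.val n s
  | .bot, _ => False
  | .imp a b, s => sat M a s → sat M b s
  | .ax a, s => ∀ t, M.rel s t → sat M a t
  | .au a b, s => ∀ π, isPath M π → π 0 = s →
      ∃ i, sat M b (π i) ∧ ∀ j, j < i → sat M a (π j)
  | .eu a b, s => ∃ π, isPath M π ∧ π 0 = s ∧
      ∃ i, sat M b (π i) ∧ ∀ j, j < i → sat M a (π j)

def satisfiable (φ : CTL) : Prop := ∃ (S : Type) (M : Kripke S) (s : S), sat M φ s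
def valid (φ : CTL) : Prop := ∀ (S : Type) (M : Kripke S) (s : S), sat M φ s

/-- Variable q occurs in a formula. -/
def occurs (q : ℕ) : CTL → Prop
  | .var n => n = q
  | .bot => False
  | .imp a b => occurs q a ∨ occurs q b
  | .ax a => occurs q a
  | .au a b => occurs q a ∨ occurs q b
  | .eu a b => occurs q a ∨ occurs q b

/-- Uniform substitution of ψ for variable p. -/
def subst (p : ℕ) (ψ : CTL) : CTL → CTL
  | .var n => if n = p then ψ else .var n
  | .bot => .bot
  | .imp a b => .imp (subst p ψ a) (subst p ψ b)
  | .ax a => .ax (subst p ψ a)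
  | .au a b => .au (subst p ψ a) (subst p ψ b)
  | .eu a b => .eu (subst p ψ a) (subst p ψ b)

/-- The relativizing translation ·' with guard variable q. -/
def relTr (q : ℕ) : CTL → CTL
  | .var n => .var n
  | .bot => .bot
  | .imp a b => .imp (relTr q a) (relTr q b)
  | .ax a => .ax (.imp (.var q) (relTr q a))
  | .au a b => .au (relTr q a) (CTL.conj (.var q) (relTr q b))
  | .eu a b => .eu (relTr q a) (CTL.conj (.var q) (relTr q b))

/-- Θ = q ∧ AG(EX q ↔ q). -/
def Theta (q : ℕ) : CTL :=
  CTL.conj (.var q) (CTL.ag (CTL.iffc (CTL.ex (.var q)) (.var q)))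

/-- Transition relation of the chain model M_m: state 0 = root r_m, state 1 = b^m,
state i+1 = a_i for 1 ≤ i ≤ 2m; self-loops everywhere. -/
def chainRel (m : ℕ) (s t : Fin (2 * m + 2)) : Prop :=
  (s.val = 0 ∧ (t.val = 1 ∨ t.val = 2)) ∨
  (2 ≤ s.val ∧ s.val ≤ 2 * m ∧ t.val = s.val + 1) ∨
  t = s

/-- p is true exactly at the root and the even-indexed chain states a_{2j}. -/
def chainVal (m : ℕ) (s : Fin (2 * m + 2)) : Prop :=
  s.val = 0 ∨ (3 ≤ s.val ∧ s.val % 2 = 1)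

def chainModel (m : ℕ) : Kripke (Fin (2 * m + 2)) where
  rel := chainRel m
  serial := fun s => ⟨s, Or.inr (Or.inr rfl)⟩
  val := fun n s => n = 0 ∧ chainVal m s

def chainRoot (m : ℕ) : Fin (2 * m + 2) := ⟨0, by omega⟩

/-- χ₀ = ∀□p, χ_{k+1} = p ∧ EX(¬p ∧ EX χ_k); the single variable p is var 0. -/
def chi : ℕ → CTL
  | 0 => CTL.ag (.var 0)
  | k + 1 => CTL.conj (.var 0) (CTL.ex (CTL.conj (CTL.neg (.var 0)) (CTL.ex (chi k))))

/-- A_m = χ_m ∧ EX AG ¬p. -/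
def Aform (m : ℕ) : CTL := CTL.conj (chi m) (CTL.ex (CTL.ag (CTL.neg (.var 0))))

/-- B_m = EX A_m. -/
def Bform (m : ℕ) : CTL := CTL.ex (Aform m)

/-- The substitution σ : pᵢ ↦ Bᵢ for 1 ≤ i ≤ n+1. -/
def sigmaSub (n : ℕ) : CTL → CTL
  | .var i => if 1 ≤ i ∧ i ≤ n + 1 then Bform i else .var i
  | .bot => .bot
  | .imp a b => .imp (sigmaSub n a) (sigmaSub n b)
  | .ax a => .ax (sigmaSub n a)
  | .au a b => .au (sigmaSub n a) (sigmaSub n b)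
  | .eu a b => .eu (sigmaSub n a) (sigmaSub n b)

/-!
In `M_k` the formula `χ_m` pins down the state it holds at. `χ₀ = AG p` holds only at the top
state `a_{2k}`, since every other `p`-state has a successor refuting `p`, and each further
alternation `p ∧ EX(¬p ∧ EX ·)` moves exactly two states down the chain. Hence `χ_m` holds only
at `a_{2k-2m}` when `m < k` and only at the root when `m = k`. Since `AG ¬p` holds only at `b`,
the conjunct `EX AG ¬p` of `A_m` together with `p` leaves only the root, so `A_m` is satisfied
in `M_k` only if `m = k`.
-/

namespace Kripke

variable {S : Type} (M : Kripke S)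

noncomputable def walk (s : S) : ℕ → S
  | 0 => s
  | n + 1 => (M.serial (walk s n)).choose

lemma isPath_walk (s : S) : isPath M (M.walk s) :=
  fun n => (M.serial (M.walk s n)).choose_spec

end Kripke

section Semantics

variable {S : Type} {M : Kripke S} {a b : CTL} {s t : S}

lemma sat_neg : sat M (CTL.neg a) s ↔ ¬ sat M a s := Iff.rfl

lemma sat_conj : sat M (CTL.conj a b) s ↔ sat M a s ∧ sat M b s := by
  simp only [CTL.conj, CTL.neg, sat]
  tauto

lemma sat_ex : sat M (CTL.ex a) s ↔ ∃ t, M.rel s t ∧ sat M a t := by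
  simp [CTL.ex, CTL.neg, sat]

lemma sat_ag :
    sat M (CTL.ag a) s ↔ ∀ π, isPath M π → π 0 = s → ∀ i, sat M a (π i) := by
  simp only [CTL.ag, CTL.ef, CTL.top, CTL.neg, sat]
  constructor
  · intro h π hπ hπs i
    by_contra hi
    exact h ⟨π, hπ, hπs, i, hi, fun _ _ hf => hf⟩
  · rintro h ⟨π, hπ, hπs, i, hi, -⟩
    exact hi (h π hπ hπs i)

lemma sat_of_sat_ag (h : sat M (CTL.ag a) s) : sat M a s :=
  sat_ag.mp h (M.walk s) (M.isPath_walk s) rfl 0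

lemma sat_of_sat_ag_of_rel (h : sat M (CTL.ag a) s) (hst : M.rel s t) : sat M a t := by
  let π : ℕ → S := fun
    | 0 => s
    | n + 1 => M.walk t n
  have hπ : isPath M π := fun
    | 0 => hst
    | n + 1 => M.isPath_walk t n
  exact sat_ag.mp h π hπ rfl 1

end Semantics

namespace chainModel

variable {k : ℕ} {s t x : Fin (2 * k + 2)}

lemma rel_iff : (chainModel k).rel s t ↔
    (s.val = 0 ∧ (t.val = 1 ∨ t.val = 2)) ∨
    (2 ≤ s.val ∧ s.val ≤ 2 * k ∧ t.val = s.val + 1) ∨ t.val = s.val := by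
  simp only [chainModel, chainRel, Fin.ext_iff]

lemma sat_var_zero : sat (chainModel k) (.var 0) s ↔ chainVal k s :=
  and_iff_right rfl

lemma exists_rel_chainVal_iff_not (hx₁ : x.val ≠ 1) (hxtop : x.val ≠ 2 * k + 1) :
    ∃ t, (chainModel k).rel x t ∧ (chainVal k t ↔ ¬ chainVal k x) := by
  have hx := x.isLt
  obtain ⟨t, ht⟩ : ∃ t : Fin (2 * k + 2), t.val = if x.val = 0 then 1 else x.val + 1 :=
    ⟨⟨if x.val = 0 then 1 else x.val + 1, by split_ifs <;> omega⟩, rfl⟩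
  refine ⟨t, ?_, ?_⟩
  · rw [rel_iff]
    split_ifs at ht <;> omega
  · unfold chainVal
    split_ifs at ht <;> omega

lemma val_eq_of_sat_ag_var (h : sat (chainModel k) (CTL.ag (.var 0)) x) :
    x.val = 2 * k + 1 ∧ 0 < k := by
  have hx : chainVal k x := sat_var_zero.mp (sat_of_sat_ag h)
  have htop : x.val = 2 * k + 1 := by
    by_contra hxtop
    obtain ⟨t, hxt, ht⟩ := exists_rel_chainVal_iff_not (by unfold chainVal at hx; omega) hxtop
    exact ht.mp (sat_var_zero.mp (sat_of_sat_ag_of_rel h hxt)) hx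
  unfold chainVal at hx
  omega

lemma val_eq_of_sat_ag_neg_var (h : sat (chainModel k) (CTL.ag (CTL.neg (.var 0))) x) :
    x.val = 1 := by
  have hx : ¬ chainVal k x := sat_var_zero.not.mp (sat_of_sat_ag h)
  by_contra hx₁
  have hxtop : x.val ≠ 2 * k + 1 := by unfold chainVal at hx; omega
  obtain ⟨t, hxt, ht⟩ := exists_rel_chainVal_iff_not hx₁ hxtop
  exact sat_var_zero.not.mp (sat_of_sat_ag_of_rel h hxt) (ht.mpr hx)

lemma val_eq_of_sat_chi {m : ℕ} (h : sat (chainModel k) (chi m) x) :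
    (x.val + 2 * m = 2 * k + 1 ∧ m < k) ∨ (x.val = 0 ∧ m = k) := by
  induction m generalizing x with
  | zero => exact Or.inl (val_eq_of_sat_ag_var h)
  | succ m ih =>
    rw [chi, sat_conj, sat_ex] at h
    obtain ⟨hx, y, hxy, hy⟩ := h
    rw [sat_conj, sat_ex, sat_neg] at hy
    obtain ⟨hy, z, hyz, hz⟩ := hy
    have hx := sat_var_zero.mp hx
    have hy := sat_var_zero.not.mp hy
    have hxy := rel_iff.mp hxy
    have hyz := rel_iff.mp hyz
    have := ih hz
    unfold chainVal at hx hy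
    omega

lemma eq_of_sat_Aform {n : ℕ} (hn : 1 ≤ n) (h : sat (chainModel k) (Aform n) x) : n = k := by
  rw [Aform, sat_conj, sat_ex] at h
  obtain ⟨hchi, t, hxt, ht⟩ := h
  have ht := val_eq_of_sat_ag_neg_var ht
  have hxt := rel_iff.mp hxt
  obtain ⟨n, rfl⟩ := Nat.exists_eq_add_of_le' hn
  have hx : chainVal k x := by
    rw [chi, sat_conj] at hchi
    exact sat_var_zero.mp hchi.1
  have := val_eq_of_sat_chi hchi
  unfold chainVal at hx
  omega

end chainModel

theorem chain_model_Aform_disjoint_general (m m' k : ℕ) (hm : 1 ≤ m) (hm' : 1 ≤ m')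
    (hne : m ≠ m') (x : Fin (2 * k + 2)) :
    ¬ (sat (chainModel k) (Aform m) x ∧ sat (chainModel k) (Aform m') x) := fun ⟨h, h'⟩ =>
  hne ((chainModel.eq_of_sat_Aform hm h).trans (chainModel.eq_of_sat_Aform hm' h').symm)

/-- The formulas A_m are pairwise jointly unsatisfiable on the chain models: no
state of any M_k satisfies both A_m and A_{m'} for m ≠ m'. -/
theorem chain_model_Aform_disjoint (m m' k : ℕ) (hm : 1 ≤ m) (hm' : 1 ≤ m')
    (hk : 1 ≤ k) (hne : m ≠ m') (x : Fin (2 * k + 2)) :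
    ¬ (sat (chainModel k) (Aform m) x ∧ sat (chainModel k) (Aform m') x) :=
  chain_model_Aform_disjoint_general m m' k hm hm' hne x
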